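/- Lemma (first-order Darboux transformations, necessity): let L₀ and L₁ be differential operators on the superline, let φ ∈ A be invertible and even, and suppose the intertwining relation M_φ∘L₀ = L₁∘M_φ holds. Then φ is an eigenfunction of L₀ with a constant eigenvalue: there exists λ ∈ ℝ such that L₀φ = λφ. -/

import Mathlib

noncomputable section
set_option synthInstance.maxHeartbeats 1000000
set_option maxHeartbeats 1000000

open TrivSqZeroExt

/-- Smooth real functions on the line, as a subalgebra of `ℝ → ℝ`. -/
def SmoothR : Subalgebra ℝ (ℝ → ℝ) where
  carrier := {f | ContDiff ℝ (⊤ : ℕ∞) f}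
  mul_mem' := fun {a b} (ha : ContDiff ℝ (⊤ : ℕ∞) a) (hb : ContDiff ℝ (⊤ : ℕ∞) b) => ha.mul hb
  add_mem' := fun {a b} (ha : ContDiff ℝ (⊤ : ℕ∞) a) (hb : ContDiff ℝ (⊤ : ℕ∞) b) => ha.add hb
  algebraMap_mem' := fun c => show ContDiff ℝ (⊤ : ℕ∞) (fun _ => c) from contDiff_const

lemma SmoothR.contDiff (f : SmoothR) : ContDiff ℝ (⊤ : ℕ∞) (f : ℝ → ℝ) := f.2

lemma SmoothR.differentiable (f : SmoothR) : Differentiable ℝ (f : ℝ → ℝ) :=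
  (SmoothR.contDiff f).differentiable (by simp)

/-- The ring `A` of superline functions: `f = f₀ + ξ f₁`. -/
abbrev SuperA : Type := TrivSqZeroExt SmoothR SmoothR


/-- Differentiation `f ↦ f′` on smooth functions, as an ℝ-linear map. -/
def derivSm : SmoothR →ₗ[ℝ] SmoothR where
  toFun f := ⟨deriv (f : ℝ → ℝ), (contDiff_infty_iff_deriv.mp (SmoothR.contDiff f)).2⟩
  map_add' f g := by
    ext x
    exact deriv_add ((SmoothR.differentiable f) x) ((SmoothR.differentiable g) x)
  map_smul' c f := by
    ext x
    have h := deriv_const_smul (f := (f : ℝ → ℝ)) c ((SmoothR.differentiable f) x)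
    have : deriv (c • (f : ℝ → ℝ)) x = c • deriv (f : ℝ → ℝ) x := by
      simpa [Pi.smul_def] using h
    simp_all

/-- The odd vector field `D = ∂_ξ + ξ ∂_x`, i.e. `D(f₀ + ξ f₁) = f₁ + ξ f₀′`. -/
def D : Module.End ℝ SuperA where
  toFun f := inl (snd f) + inr (derivSm (fst f))
  map_add' f g := by apply TrivSqZeroExt.ext <;> simp
  map_smul' c f := by apply TrivSqZeroExt.ext <;> simp

/-- Multiplication by `a ∈ A` as an ℝ-linear endomorphism of `A`. -/
def mulOp (a : SuperA) : Module.End ℝ SuperA := LinearMap.mulLeft ℝ a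

/-- `L` is a differential operator on the superline of order `≤ m`:
`L = a_m D^m + ⋯ + a₀`. -/
def IsOpOfOrderLE (L : Module.End ℝ SuperA) (m : ℕ) : Prop :=
  ∃ a : Fin (m + 1) → SuperA, L = ∑ i : Fin (m + 1), mulOp (a i) * D ^ (i : ℕ)

/-- `L` is a differential operator on the superline (of some order). -/
def IsDiffOp (L : Module.End ℝ SuperA) : Prop := ∃ m, IsOpOfOrderLE L m

/-- `L` is a differential operator of order `< m` (i.e. of order `≤ m − 1`;
for `m = 0` this means `L = 0`). -/
def IsOpOfOrderLT (L : Module.End ℝ SuperA) (m : ℕ) : Prop :=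
  ∃ a : Fin m → SuperA, L = ∑ i : Fin m, mulOp (a i) * D ^ (i : ℕ)

/-- `L` is a nondegenerate operator of order `m`: the top coefficient `a_m`
is invertible in `A`. -/
def IsNondegOfOrder (L : Module.End ℝ SuperA) (m : ℕ) : Prop :=
  ∃ a : Fin (m + 1) → SuperA, IsUnit (a (Fin.last m)) ∧
    L = ∑ i : Fin (m + 1), mulOp (a i) * D ^ (i : ℕ)

/-- `L` is a monic operator of order `m`: the top coefficient `a_m` equals `1`. -/
def IsMonicOfOrder (L : Module.End ℝ SuperA) (m : ℕ) : Prop :=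
  ∃ a : Fin (m + 1) → SuperA, a (Fin.last m) = 1 ∧
    L = ∑ i : Fin (m + 1), mulOp (a i) * D ^ (i : ℕ)

/-- `f = f₀ + ξ f₁` is even iff `f₁ = 0`. -/
def SuperA.IsEven (f : SuperA) : Prop := snd f = 0

/-- `f = f₀ + ξ f₁` is odd iff `f₀ = 0`. -/
def SuperA.IsOdd (f : SuperA) : Prop := fst f = 0

/-- `f = f₀ + ξ f₁` is constant iff `f₁ = 0` and `f₀` is a constant function. -/
def SuperA.IsConstant (f : SuperA) : Prop :=
  snd f = 0 ∧ ∃ c : ℝ, ∀ x : ℝ, ((fst f : SmoothR) : ℝ → ℝ) x = c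

/-- The first-order operator `M_φ = D − (Dφ)φ⁻¹ = φ ∘ D ∘ φ⁻¹`. -/
def Mphi (φ : SuperA) : Module.End ℝ SuperA := D - mulOp (D φ * Ring.inverse φ)


lemma derivSm_mul (f g : SmoothR) : derivSm (f * g) = f * derivSm g + derivSm f * g := by
  ext x
  have : deriv ((f : ℝ → ℝ) * (g : ℝ → ℝ)) x
      = deriv (f : ℝ → ℝ) x * (g : ℝ → ℝ) x + (f : ℝ → ℝ) x * deriv (g : ℝ → ℝ) x :=
    deriv_mul ((SmoothR.differentiable f) x) ((SmoothR.differentiable g) x)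
  simpa [derivSm, mul_comm, add_comm] using this

lemma derivSm_one : derivSm (1 : SmoothR) = 0 := by
  ext x
  show deriv ((1 : SmoothR) : ℝ → ℝ) x = 0
  have h1 : ((1 : SmoothR) : ℝ → ℝ) = fun _ => (1 : ℝ) := rfl
  rw [h1, deriv_const]

lemma D_apply (f : SuperA) : D f = inl (snd f) + inr (derivSm (fst f)) := rfl

lemma fst_D (f : SuperA) : fst (D f) = snd f := by
  rw [D_apply]; simp

lemma snd_D (f : SuperA) : snd (D f) = derivSm (fst f) := by
  rw [D_apply]; simp

lemma Mphi_apply (φ f : SuperA) : Mphi φ f = D f - (D φ * Ring.inverse φ) * f := rfl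

/-- first-order Darboux transformations, necessity: if `φ` is
invertible and even and `M_φ ∘ L₀ = L₁ ∘ M_φ`, then `φ` is an eigenfunction of
`L₀` with a constant (real) eigenvalue. -/
theorem first_order_darboux_necessity
    (L₀ L₁ : Module.End ℝ SuperA) (hL₀ : IsDiffOp L₀) (hL₁ : IsDiffOp L₁)
    (φ : SuperA) (hinv : IsUnit φ) (heven : SuperA.IsEven φ)
    (h : Mphi φ * L₀ = L₁ * Mphi φ) :
    ∃ lam : ℝ, L₀ φ = lam • φ := by
  set g : SuperA := L₀ φ with hg
  set ψ : SuperA := Ring.inverse φ with hψ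
  have hφψ : φ * ψ = 1 := Ring.mul_inverse_cancel φ hinv
  have hψφ : ψ * φ = 1 := Ring.inverse_mul_cancel φ hinv
  have hM : Mphi φ φ = 0 := by
    rw [Mphi_apply, ← hψ, mul_assoc, hψφ, mul_one, sub_self]
  have hMg : Mphi φ g = 0 := by
    have h' := congrArg (fun T : Module.End ℝ SuperA => T φ) h
    simp only [Module.End.mul_apply] at h'
    rw [hM, map_zero] at h'
    exact h'
  have hMg0 : D g = (D φ * ψ) * g := by
    rw [Mphi_apply, ← hψ, sub_eq_zero] at hMg
    exact hMg
  have hsndφ : snd φ = 0 := heven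
  have hfstunit : IsUnit (fst φ) := by
    refine IsUnit.of_mul_eq_one (a := fst φ) (fst ψ) ?_
    have := congrArg fst hφψ
    simpa using this
  have hsndψ : snd ψ = 0 := by
    have h2 := congrArg snd hφψ
    simp only [snd_mul, snd_one, hsndφ, smul_zero, add_zero] at h2
    have h3 : fst φ * snd ψ = 0 := by simpa [smul_eq_mul] using h2
    exact (hfstunit.mul_right_eq_zero).mp h3
  have hsndg : snd g = 0 := by
    have h1 := congrArg fst hMg0
    simp only [fst_D, fst_mul, hsndφ, zero_mul] at h1
    exact h1
  have hkey : derivSm (fst g) = derivSm (fst φ) * fst ψ * fst g := by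
    have h1 := congrArg snd hMg0
    simp only [snd_D, snd_mul, fst_mul, fst_D, snd_D, hsndφ, hsndψ, hsndg,
      zero_mul, mul_zero, smul_zero, zero_smul, zero_add, add_zero,
      smul_eq_mul, MulOpposite.smul_eq_mul_unop, MulOpposite.unop_op] at h1
    exact h1
  set φ₀ : SmoothR := fst φ with hφ₀
  set ψ₀ : SmoothR := fst ψ with hψ₀
  set g₀ : SmoothR := fst g with hg₀
  have hφψ₀ : φ₀ * ψ₀ = 1 := by
    have := congrArg fst hφψ; simpa using this
  have hder1 : φ₀ * derivSm ψ₀ + derivSm φ₀ * ψ₀ = 0 := by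
    have h2 := congrArg derivSm hφψ₀
    rw [derivSm_mul, derivSm_one] at h2
    exact h2
  have hF : derivSm (g₀ * ψ₀) = 0 := by
    rw [derivSm_mul, hkey]
    linear_combination g₀ * ψ₀ * hder1 - g₀ * derivSm ψ₀ * hφψ₀
  set F : SmoothR := g₀ * ψ₀ with hFdef
  have hFderiv : ∀ x : ℝ, deriv (F : ℝ → ℝ) x = 0 := by
    intro x
    have h2 := congrArg (fun u : SmoothR => (u : ℝ → ℝ) x) hF
    simpa [derivSm] using h2
  have hconst : ∀ x : ℝ, (F : ℝ → ℝ) x = (F : ℝ → ℝ) 0 := fun x =>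
    is_const_of_deriv_eq_zero (SmoothR.differentiable F) hFderiv x 0
  refine ⟨(F : ℝ → ℝ) 0, ?_⟩
  have hpt : ∀ x : ℝ, (φ₀ : ℝ → ℝ) x * (ψ₀ : ℝ → ℝ) x = 1 := by
    intro x
    have h2 := congrArg (fun u : SmoothR => (u : ℝ → ℝ) x) hφψ₀
    simpa using h2
  have hg₀eq : g₀ = ((F : ℝ → ℝ) 0) • φ₀ := by
    apply Subtype.ext
    funext x
    show (g₀ : ℝ → ℝ) x = ((F : ℝ → ℝ) 0) • (φ₀ : ℝ → ℝ) x
    rw [smul_eq_mul]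
    have h1 : (g₀ : ℝ → ℝ) x * (ψ₀ : ℝ → ℝ) x = (F : ℝ → ℝ) 0 := by
      have h2 := hconst x
      simpa [hFdef] using h2
    calc (g₀ : ℝ → ℝ) x = (g₀ : ℝ → ℝ) x * (ψ₀ : ℝ → ℝ) x * (φ₀ : ℝ → ℝ) x := by
          rw [mul_assoc, mul_comm ((ψ₀ : ℝ → ℝ) x), hpt x, mul_one]
      _ = (F : ℝ → ℝ) 0 * (φ₀ : ℝ → ℝ) x := by rw [h1]
  apply TrivSqZeroExt.ext
  · simpa using hg₀eq
  · simp [hsndg, hsndφ]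

end
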